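/- arXiv:1905.04346 — 2 statements merged into one kernel-verified Lean document; each statement's English description precedes it below -/
import Mathlib

section
/- Let f be L-smooth with global minimum f* and satisfy the P-L condition with modulus μ. Let g be any vector, γ ∈ (0, 1/L), and x⁺ = x - γg. Then f(x⁺) - f* ≤ (1 - ν)(f(x) - f*) + (γ(2 - Lγ)/2)‖g - ∇f(x)‖², where ν = (1/2)γμ(1 - Lγ). -/
/-!
The descent lemma for an `L`-smooth `f` bounds `f (x - γ • g)` by the quadratic model
`f x - γ ⟪∇f x, g⟫ + L γ² ‖g‖² / 2`. Polarizing `⟪∇f x, g⟫` and dropping `γ (1 - L γ) ‖g‖² / 2 ≥ 0`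
gives `f (x - γ • g) ≤ f x - γ ‖∇f x‖² / 2 + γ ‖g - ∇f x‖² / 2`, and the P-L inequality turns
`-γ ‖∇f x‖² / 2` into `-γ μ (f x - f*)`; this bound implies the claim because `f x - f* ≥ 0`
and `0 < L γ < 1`.
-/

open RealInnerProductSpace

section Descent

variable {F : Type*} [NormedAddCommGroup F] [InnerProductSpace ℝ F] [CompleteSpace F]
  {f : F → ℝ}

theorem hasDerivAt_comp_add_smul {x v : F} {t : ℝ} (hf : DifferentiableAt ℝ f (x + t • v)) :
    HasDerivAt (fun s : ℝ => f (x + s • v)) ⟪gradient f (x + t • v), v⟫ t := by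
  have hline : HasDerivAt (fun s : ℝ => x + s • v) v t := by
    simpa using ((hasDerivAt_id t).smul_const v).const_add x
  have hgrad : HasFDerivAt f (InnerProductSpace.toDual ℝ F (gradient f (x + t • v)))
      (x + t • v) := hf.hasGradientAt
  simpa [Function.comp_def] using hgrad.comp_hasDerivAt t hline

theorem inner_gradient_add_smul_le {L : ℝ}
    (hsmooth : ∀ x y, ‖gradient f x - gradient f y‖ ≤ L * ‖x - y‖) (x v : F) {t : ℝ}
    (ht : 0 ≤ t) :
    ⟪gradient f (x + t • v), v⟫ ≤ ⟪gradient f x, v⟫ + L * t * ‖v‖ ^ 2 := by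
  have hlip : ‖gradient f (x + t • v) - gradient f x‖ ≤ L * (t * ‖v‖) := by
    simpa [norm_smul, abs_of_nonneg ht] using hsmooth (x + t • v) x
  have hcs := (real_inner_le_norm (gradient f (x + t • v) - gradient f x) v).trans
    (mul_le_mul_of_nonneg_right hlip (norm_nonneg v))
  rw [inner_sub_left] at hcs
  linarith

theorem apply_add_le_of_lipschitz_gradient {L : ℝ} (hdiff : Differentiable ℝ f)
    (hsmooth : ∀ x y, ‖gradient f x - gradient f y‖ ≤ L * ‖x - y‖) (x v : F) :
    f (x + v) ≤ f x + ⟪gradient f x, v⟫ + L / 2 * ‖v‖ ^ 2 := by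
  set B : ℝ → ℝ := fun t => f x + t * ⟪gradient f x, v⟫ + L / 2 * t ^ 2 * ‖v‖ ^ 2
  have hB : ∀ t, HasDerivAt B (⟪gradient f x, v⟫ + L * t * ‖v‖ ^ 2) t := fun t =>
    ((((hasDerivAt_id' t).mul_const ⟪gradient f x, v⟫).const_add (f x)).add
      (((hasDerivAt_pow 2 t).const_mul (L / 2)).mul_const (‖v‖ ^ 2))).congr_deriv (by ring)
  have hφ : ∀ t : ℝ, HasDerivAt (fun s : ℝ => f (x + s • v)) ⟪gradient f (x + t • v), v⟫ t :=
    fun t => hasDerivAt_comp_add_smul (hdiff _)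
  have key := image_le_of_deriv_right_le_deriv_boundary
    (fun t _ => (hφ t).continuousAt.continuousWithinAt)
    (fun t _ => (hφ t).hasDerivWithinAt) (by simp [B])
    (fun t _ => (hB t).continuousAt.continuousWithinAt) (fun t _ => (hB t).hasDerivWithinAt)
    (fun t ht => inner_gradient_add_smul_le hsmooth x v ht.1)
    (Set.right_mem_Icc.2 zero_le_one)
  simpa [B] using key

theorem apply_sub_smul_le_of_lipschitz_gradient {L γ : ℝ} (hdiff : Differentiable ℝ f)
    (hsmooth : ∀ x y, ‖gradient f x - gradient f y‖ ≤ L * ‖x - y‖)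
    (hγ : 0 ≤ γ) (hLγ : L * γ ≤ 1) (x g : F) :
    f (x - γ • g) ≤
      f x - γ / 2 * ‖gradient f x‖ ^ 2 + γ / 2 * ‖g - gradient f x‖ ^ 2 := by
  have hdescent := apply_add_le_of_lipschitz_gradient hdiff hsmooth x (-(γ • g))
  rw [← sub_eq_add_neg, inner_neg_right, real_inner_smul_right, norm_neg, norm_smul,
    Real.norm_eq_abs, abs_of_nonneg hγ] at hdescent
  have hpolar := norm_sub_sq_real g (gradient f x)
  rw [real_inner_comm] at hpolar
  have hdrop : 0 ≤ γ * (1 - L * γ) * ‖g‖ ^ 2 :=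
    mul_nonneg (mul_nonneg hγ (sub_nonneg.2 hLγ)) (sq_nonneg _)
  nlinarith

end Descent

/-- One-step progress inequality for a gradient step with an inexact gradient `g`,
under `L`-smoothness and the P-L condition. -/
theorem one_step_PL_progress {m : ℕ} (f : EuclideanSpace ℝ (Fin m) → ℝ)
    (L μ fstar : ℝ) (hμ : 0 < μ) (hdiff : Differentiable ℝ f)
    (hsmooth : ∀ x y, ‖gradient f x - gradient f y‖ ≤ L * ‖x - y‖)
    (hmin : ∀ x, fstar ≤ f x)
    (hPL : ∀ x, μ * (f x - fstar) ≤ (1 / 2) * ‖gradient f x‖ ^ 2)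
    (γ : ℝ) (hγ : 0 < γ) (hγL : γ < 1 / L)
    (x g : EuclideanSpace ℝ (Fin m)) :
    f (x - γ • g) - fstar ≤
      (1 - (1 / 2) * γ * μ * (1 - L * γ)) * (f x - fstar)
        + γ * (2 - L * γ) / 2 * ‖g - gradient f x‖ ^ 2 := by
  have hL : 0 < L := one_div_pos.mp (hγ.trans hγL)
  have hLγ : L * γ < 1 := by
    have := (lt_div_iff₀ hL).mp hγL
    linarith
  have hstep := apply_sub_smul_le_of_lipschitz_gradient hdiff hsmooth hγ.le hLγ.le x g
  have hgap : 0 ≤ f x - fstar := sub_nonneg.2 (hmin x)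
  have hPLx := mul_le_mul_of_nonneg_left (hPL x) hγ.le
  have hfactor : 0 ≤ γ * μ * (1 + L * γ) / 2 * (f x - fstar) := by positivity
  have herror : 0 ≤ γ * (1 - L * γ) / 2 * ‖g - gradient f x‖ ^ 2 := by
    have := sub_nonneg.2 hLγ.le
    positivity
  linarith
end

section
/- Let f(x) = g(Ax) where g : ℝ^k → ℝ is differentiable and strongly convex with modulus μ > 0 and A is a k × m real matrix (possibly rank deficient). If f attains its global minimum f*, then f satisfies the Polyak-Lojasiewicz condition with some modulus μ' > 0, i.e., there exists μ' > 0 such that (1/2)‖∇f(x)‖² ≥ μ'(f(x) - f*) for all x. -/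
/-! For a minimiser `x⋆`, the step `A x⋆ - A x` lies in `range A`, so strong convexity of `g` at
`A x` only sees the projection `P ∇g(A x)` of the gradient onto `range A`:
`f x - f⋆ ≤ ‖P ∇g(A x)‖² / (2μ)`. The adjoint `Aᵀ` vanishes on `(range A)ᗮ` and is injective
on `range A`, hence bounded below there by some `1 / K`; as `∇f x = Aᵀ ∇g(A x) = Aᵀ P ∇g(A x)`,
this gives `‖P ∇g(A x)‖ ≤ K ‖∇f x‖`, and the P-L condition holds with `μ' = μ / K²`. -/

open RealInnerProductSpace

theorem neg_norm_sq_div_le_inner_add_mul_norm_sq {F : Type*} [NormedAddCommGroup F]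
    [InnerProductSpace ℝ F] {μ : ℝ} (hμ : 0 < μ) (p s : F) :
    -(‖p‖ ^ 2 / (2 * μ)) ≤ ⟪p, s⟫ + μ / 2 * ‖s‖ ^ 2 := by
  have hsq : ‖μ • s + p‖ ^ 2 = μ ^ 2 * ‖s‖ ^ 2 + 2 * μ * ⟪p, s⟫ + ‖p‖ ^ 2 := by
    rw [norm_add_sq_real, norm_smul, real_inner_smul_left, real_inner_comm,
      Real.norm_of_nonneg hμ.le]
    ring
  have hsum :
      ⟪p, s⟫ + μ / 2 * ‖s‖ ^ 2 + ‖p‖ ^ 2 / (2 * μ) = ‖μ • s + p‖ ^ 2 / (2 * μ) := by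
    rw [hsq]; field_simp; ring
  have hnonneg : 0 ≤ ‖μ • s + p‖ ^ 2 / (2 * μ) := by positivity
  linarith

theorem Submodule.sub_le_norm_starProjection_sq_div {F : Type*} [NormedAddCommGroup F]
    [InnerProductSpace ℝ F] (K : Submodule ℝ F) [K.HasOrthogonalProjection] {μ a b : ℝ}
    (hμ : 0 < μ) {w s : F} (hs : s ∈ K) (h : a + ⟪w, s⟫ + μ / 2 * ‖s‖ ^ 2 ≤ b) :
    a - b ≤ ‖K.starProjection w‖ ^ 2 / (2 * μ) := by
  have hw : ⟪w, s⟫ = ⟪K.starProjection w, s⟫ := by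
    rw [K.inner_starProjection_left_eq_right, K.starProjection_eq_self_iff.mpr hs]
  have hyoung := neg_norm_sq_div_le_inner_add_mul_norm_sq hμ (K.starProjection w) s
  linarith

namespace ContinuousLinearMap

variable {E F : Type*} [NormedAddCommGroup E] [InnerProductSpace ℝ E] [CompleteSpace E]
  [NormedAddCommGroup F] [InnerProductSpace ℝ F] [CompleteSpace F]

theorem _root_.HasGradientAt.comp_continuousLinearMap {g : F → ℝ} {g' : F} {L : E →L[ℝ] F}
    {x : E} (hg : HasGradientAt g g' (L x)) : HasGradientAt (g ∘ L) (L.adjoint g') x := by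
  have hdual : InnerProductSpace.toDual ℝ E (L.adjoint g') =
      (InnerProductSpace.toDual ℝ F g').comp L := by
    ext v
    simp [adjoint_inner_left]
  rw [hasGradientAt_iff_hasFDerivAt] at hg ⊢
  rw [hdual]
  exact hg.comp x L.hasFDerivAt

theorem adjoint_starProjection_range (L : E →L[ℝ] F) [L.range.HasOrthogonalProjection]
    (w : F) : L.adjoint (L.range.starProjection w) = L.adjoint w := by
  have h := L.range.sub_starProjection_mem_orthogonal w
  rw [L.orthogonal_range, LinearMap.mem_ker, coe_coe, map_sub, sub_eq_zero] at h
  exact h.symm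

theorem exists_norm_starProjection_range_le_mul_norm_adjoint [FiniteDimensional ℝ F]
    (L : E →L[ℝ] F) :
    ∃ K > 0, ∀ w, ‖L.range.starProjection w‖ ≤ K * ‖L.adjoint w‖ := by
  have hinj : LinearMap.ker (L.adjoint.toLinearMap ∘ₗ L.range.subtype) = ⊥ := by
    rw [LinearMap.ker_eq_bot']
    intro s hs
    have hs' : (s : F) ∈ L.range ⊓ L.rangeᗮ := ⟨s.2, by rw [L.orthogonal_range]; exact hs⟩
    rw [L.range.inf_orthogonal_eq_bot, Submodule.mem_bot] at hs'
    exact Subtype.ext hs'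
  obtain ⟨K, hK, hanti⟩ := LinearMap.exists_antilipschitzWith _ hinj
  refine ⟨K, hK, fun w => ?_⟩
  simpa [adjoint_starProjection_range] using
    hanti.le_mul_norm (map_zero _)
      ⟨L.range.starProjection w, L.range.starProjection_apply_mem w⟩

theorem exists_polyakLojasiewicz_comp [FiniteDimensional ℝ F] {g : F → ℝ} {μ : ℝ}
    (hμ : 0 < μ) (hsc : ∀ u v, g v ≥ g u + ⟪gradient g u, v - u⟫ + μ / 2 * ‖v - u‖ ^ 2)
    (L : E →L[ℝ] F) :
    ∃ μ' > 0, ∀ x y,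
      μ' * (g (L x) - g (L y)) ≤ 1 / 2 * ‖L.adjoint (gradient g (L x))‖ ^ 2 := by
  obtain ⟨K, hK, hproj⟩ := L.exists_norm_starProjection_range_le_mul_norm_adjoint
  refine ⟨μ / K ^ 2, by positivity, fun x y => ?_⟩
  set w := gradient g (L x)
  have hgap : g (L x) - g (L y) ≤ ‖L.range.starProjection w‖ ^ 2 / (2 * μ) :=
    Submodule.sub_le_norm_starProjection_sq_div L.range hμ (s := L (y - x)) ⟨y - x, rfl⟩
      (by rw [map_sub]; exact hsc (L x) (L y))
  calc μ / K ^ 2 * (g (L x) - g (L y))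
      ≤ μ / K ^ 2 * (‖L.range.starProjection w‖ ^ 2 / (2 * μ)) :=
        mul_le_mul_of_nonneg_left hgap (by positivity)
    _ = ‖L.range.starProjection w‖ ^ 2 / (2 * K ^ 2) := by field_simp
    _ ≤ (K * ‖L.adjoint w‖) ^ 2 / (2 * K ^ 2) := by gcongr; exact hproj w
    _ = 1 / 2 * ‖L.adjoint w‖ ^ 2 := by field_simp

end ContinuousLinearMap

theorem composition_strongly_convex_PL_general {k m : ℕ}
    (g : EuclideanSpace ℝ (Fin k) → ℝ) (μ : ℝ) (hμ : 0 < μ)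
    (hgdiff : Differentiable ℝ g)
    (hsc : ∀ u v, g v ≥ g u + ⟪gradient g u, v - u⟫ + μ / 2 * ‖v - u‖ ^ 2)
    (A : Matrix (Fin k) (Fin m) ℝ)
    (f : EuclideanSpace ℝ (Fin m) → ℝ)
    (hfdef : ∀ x, f x = g (WithLp.toLp 2 (A.mulVec x)))
    (fstar : ℝ) (hattain : ∃ x, f x = fstar) :
    ∃ μ' > 0, ∀ x, μ' * (f x - fstar) ≤ (1 / 2) * ‖gradient f x‖ ^ 2 := by
  obtain ⟨xs, rfl⟩ := hattain
  set L := LinearMap.toContinuousLinearMap (Matrix.toLpLin 2 2 A)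
  have hf : f = g ∘ L := funext hfdef
  have hgrad (x) : gradient f x = L.adjoint (gradient g (L x)) :=
    hf ▸ (hgdiff (L x)).hasGradientAt.comp_continuousLinearMap.gradient
  obtain ⟨μ', hμ', hPL⟩ := L.exists_polyakLojasiewicz_comp hμ hsc
  exact ⟨μ', hμ', fun x => by rw [hgrad, hf]; exact hPL x xs⟩

/-- If `f(x) = g(Ax)` with `g` strongly convex (modulus `μ > 0`) and `A` a possibly
rank-deficient matrix, and `f` attains its global minimum `f*`, then `f` satisfies
the P-L condition with some modulus `μ' > 0`. -/
theorem composition_strongly_convex_PL {k m : ℕ}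
    (g : EuclideanSpace ℝ (Fin k) → ℝ) (μ : ℝ) (hμ : 0 < μ)
    (hgdiff : Differentiable ℝ g)
    (hsc : ∀ u v, g v ≥ g u + ⟪gradient g u, v - u⟫ + μ / 2 * ‖v - u‖ ^ 2)
    (A : Matrix (Fin k) (Fin m) ℝ)
    (f : EuclideanSpace ℝ (Fin m) → ℝ)
    (hfdef : ∀ x, f x = g (WithLp.toLp 2 (A.mulVec x)))
    (fstar : ℝ) (hmin : ∀ x, fstar ≤ f x) (hattain : ∃ x, f x = fstar) :
    ∃ μ' > 0, ∀ x, μ' * (f x - fstar) ≤ (1 / 2) * ‖gradient f x‖ ^ 2 :=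
  composition_strongly_convex_PL_general g μ hμ hgdiff hsc A f hfdef fstar hattain
end
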